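/- The simple game on N = {1,...,7} with maximal losing coalitions L^M = {{1,2,3}, {3,4,5,6}} equals the intersection of the weighted games [1; 0,0,0,1,1,1,1] and [1; 1,1,0,0,0,0,1], and it is not itself a weighted game; hence its dimension is exactly 2. -/

import Mathlib

open Finset

/-- Winning predicate of the simple game determined by a collection `L` of
(maximal) losing coalitions: `S` loses iff `S ⊆ y` for some `y ∈ L`. -/
def wins {n : ℕ} (L : Finset (Finset (Fin n))) (S : Finset (Fin n)) : Prop :=
  ∀ y ∈ L, ¬ S ⊆ y

/-- A winning predicate is weighted with quota `q` and nonnegative weights `w`. -/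
def IsWeightedRepr {n : ℕ} (win : Finset (Fin n) → Prop) (q : ℝ) (w : Fin n → ℝ) : Prop :=
  0 ≤ q ∧ (∀ i, 0 ≤ w i) ∧ ∀ S : Finset (Fin n), win S ↔ q ≤ ∑ i ∈ S, w i

/-- A winning predicate is weighted. -/
def IsWeighted {n : ℕ} (win : Finset (Fin n) → Prop) : Prop :=
  ∃ q w, IsWeightedRepr win q w

/-- Hamming distance between coalitions. -/
def hdist {n : ℕ} (x y : Finset (Fin n)) : ℕ := (x \ y).card + (y \ x).card

/-- The dimension of a game given by its winning predicate: the least `d` such that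
the game is the intersection of `d` weighted games. -/
noncomputable def gameDim {n : ℕ} (win : Finset (Fin n) → Prop) : ℕ :=
  sInf {d | ∃ W : Fin d → (Finset (Fin n) → Prop),
    (∀ i, IsWeighted (W i)) ∧ ∀ S, win S ↔ ∀ i, W i S}

/-- A simple game on `n` players. -/
structure SimpleGame (n : ℕ) where
  win : Finset (Fin n) → Prop
  mono : ∀ S T : Finset (Fin n), S ⊆ T → win S → win T
  empty_not_win : ¬ win ∅
  univ_win : win Finset.univ

/-- The maximal losing coalitions of a simple game. -/
def maxLosing {n : ℕ} (G : SimpleGame n) : Set (Finset (Fin n)) :=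
  {T | ¬ G.win T ∧ ∀ T' : Finset (Fin n), T ⊂ T' → G.win T'}

/-- `C` is a binary covering code of length `n` with covering radius `1`. -/
def IsCoveringCode {n : ℕ} (C : Finset (Finset (Fin n))) : Prop :=
  ∀ x : Finset (Fin n), ∃ c ∈ C, hdist x c ≤ 1

/-- `K n`: the minimum size of a binary covering code of length `n`, radius `1`. -/
noncomputable def K (n : ℕ) : ℕ :=
  sInf {k | ∃ C : Finset (Finset (Fin n)), IsCoveringCode C ∧ C.card = k}

/-!
A maximal losing coalition `B` yields the weighted game with unit weights off `B` and quota `1`,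
in which `S` wins iff `S ⊄ B`; so a game with `m` maximal losing coalitions is the intersection
of `m` weighted games, and the two weight vectors of the theorem are the indicators of the
complements of `{1,2,3}` and `{3,4,5,6}`. The game is not weighted by trading: `{1,4}` and `{2,5}`
win while `{1,2}` and `{4,5}` lose, yet both pairs have the same union and intersection, hence the
same total weight. Dimension `0` is impossible because `∅` loses. (In the code players are `0, …, 6`.)
-/

lemma one_le_sum_ite_iff_not_subset {α : Type*} [DecidableEq α] (B S : Finset α) :
    (1 : ℝ) ≤ ∑ i ∈ S, (if i ∈ B then 0 else 1) ↔ ¬ S ⊆ B := by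
  have hsum : ∑ i ∈ S, (if i ∈ B then (0 : ℝ) else 1) = (S \ B).card := by
    rw [Finset.sum_ite, Finset.sum_const_zero, zero_add, Finset.sum_const, nsmul_one,
      Finset.sdiff_eq_filter]
  rw [hsum, Nat.one_le_cast, Nat.one_le_iff_ne_zero, Finset.card_ne_zero, Finset.sdiff_nonempty]

lemma wins_pair_iff {n : ℕ} (A B S : Finset (Fin n)) :
    wins {A, B} S ↔ ¬ S ⊆ A ∧ ¬ S ⊆ B := by
  simp [wins]

lemma isWeightedRepr_wins_singleton {n : ℕ} (B : Finset (Fin n)) :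
    IsWeightedRepr (wins {B}) 1 (fun i => if i ∈ B then 0 else 1) := by
  refine ⟨zero_le_one, fun i => by positivity, fun S => ?_⟩
  rw [one_le_sum_ite_iff_not_subset]
  simp [wins]

lemma exists_weighted_inter_card {n : ℕ} (L : Finset (Finset (Fin n))) :
    ∃ W : Fin L.card → (Finset (Fin n) → Prop),
      (∀ i, IsWeighted (W i)) ∧ ∀ S, wins L S ↔ ∀ i, W i S := by
  refine ⟨fun i => wins {(L.equivFin.symm i).1},
    fun i => ⟨_, _, isWeightedRepr_wins_singleton _⟩, fun S => ?_⟩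
  simp only [wins, Finset.mem_singleton, forall_eq]
  exact ⟨fun h i => h _ (L.equivFin.symm i).2,
    fun h y hy => by simpa using h (L.equivFin ⟨y, hy⟩)⟩

lemma gameDim_wins_le_card {n : ℕ} (L : Finset (Finset (Fin n))) :
    gameDim (wins L) ≤ L.card :=
  Nat.sInf_le (exists_weighted_inter_card L)

lemma not_isWeighted_of_trade {n : ℕ} {win : Finset (Fin n) → Prop} {A B C D : Finset (Fin n)}
    (hA : win A) (hB : win B) (hC : ¬ win C) (hD : ¬ win D)
    (hunion : A ∪ B = C ∪ D) (hinter : A ∩ B = C ∩ D) : ¬ IsWeighted win := by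
  rintro ⟨q, w, -, -, hw⟩
  rw [hw] at hA hB hC hD
  have := Finset.sum_union_inter (s₁ := A) (s₂ := B) (f := w)
  rw [hunion, hinter, Finset.sum_union_inter] at this
  linarith

lemma two_le_gameDim_wins {n : ℕ} {L : Finset (Finset (Fin n))} (hL : L.Nonempty)
    (hw : ¬ IsWeighted (wins L)) : 2 ≤ gameDim (wins L) := by
  refine le_csInf ⟨_, exists_weighted_inter_card L⟩ fun d ⟨W, hW, hW_inter⟩ => ?_
  obtain ⟨y, hy⟩ := hL
  have hd₀ : d ≠ 0 := by
    rintro rfl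
    exact (hW_inter ∅).2 finZeroElim y hy (Finset.empty_subset y)
  have hd₁ : d ≠ 1 := by
    rintro rfl
    obtain ⟨q, w, hrepr⟩ := hW 0
    refine hw ⟨q, w, hrepr.1, hrepr.2.1, fun S => ?_⟩
    rw [hW_inter, ← hrepr.2.2, Fin.forall_fin_one]
  omega

theorem stmt16 :
    (∀ S : Finset (Fin 7),
      wins ({({0, 1, 2} : Finset (Fin 7)), {2, 3, 4, 5}} : Finset (Finset (Fin 7))) S ↔
        ((1 : ℝ) ≤ ∑ i ∈ S, (![0, 0, 0, 1, 1, 1, 1] : Fin 7 → ℝ) i ∧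
         (1 : ℝ) ≤ ∑ i ∈ S, (![1, 1, 0, 0, 0, 0, 1] : Fin 7 → ℝ) i)) ∧
    ¬ IsWeighted (wins ({({0, 1, 2} : Finset (Fin 7)), {2, 3, 4, 5}} :
        Finset (Finset (Fin 7)))) ∧
    gameDim (wins ({({0, 1, 2} : Finset (Fin 7)), {2, 3, 4, 5}} :
        Finset (Finset (Fin 7)))) = 2 := by
  have hw₁ : (![0, 0, 0, 1, 1, 1, 1] : Fin 7 → ℝ) =
      fun i => if i ∈ ({0, 1, 2} : Finset (Fin 7)) then 0 else 1 := by
    funext i; fin_cases i <;> rfl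
  have hw₂ : (![1, 1, 0, 0, 0, 0, 1] : Fin 7 → ℝ) =
      fun i => if i ∈ ({2, 3, 4, 5} : Finset (Fin 7)) then 0 else 1 := by
    funext i; fin_cases i <;> rfl
  have hnot : ¬ IsWeighted (wins ({({0, 1, 2} : Finset (Fin 7)), {2, 3, 4, 5}} :
      Finset (Finset (Fin 7)))) :=
    not_isWeighted_of_trade (A := {0, 3}) (B := {1, 4}) (C := {0, 1}) (D := {3, 4})
      ((wins_pair_iff _ _ _).2 (by decide)) ((wins_pair_iff _ _ _).2 (by decide))
      (by rw [wins_pair_iff]; decide) (by rw [wins_pair_iff]; decide) (by decide) (by decide)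
  refine ⟨fun S => ?_, hnot, le_antisymm (gameDim_wins_le_card _) ?_⟩
  · rw [wins_pair_iff, hw₁, hw₂, one_le_sum_ite_iff_not_subset, one_le_sum_ite_iff_not_subset]
  · exact two_le_gameDim_wins (Finset.insert_nonempty _ _) hnot
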